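/- arXiv:2511.04323 — 3 statements merged into one kernel-verified Lean document; each statement's English description precedes it below -/
import Mathlib

section
/- Let V : [0,∞) → [0,∞) be differentiable with V(0)=0, and suppose there are A > 0 and p > 1 such that V'(r) ≤ 2πr + A·r·V(r)^{1-1/p} for all r ∈ (0,1). Then V(r) ≤ (2π + A)^{p+1} · r² for all r ∈ (0,1). -/
open Real Set

set_option maxHeartbeats 1000000

theorem volume_upper_growth (V : ℝ → ℝ) (A p : ℝ) (hA : 0 < A) (hp : 1 < p)
    (hdiff : Differentiable ℝ V)
    (hnonneg : ∀ r ≥ (0:ℝ), 0 ≤ V r)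
    (h0 : V 0 = 0)
    (hode : ∀ r ∈ Set.Ioo (0:ℝ) 1,
      deriv V r ≤ 2 * Real.pi * r + A * r * (V r) ^ (1 - 1 / p)) :
    ∀ r ∈ Set.Ioo (0:ℝ) 1, V r ≤ (2 * Real.pi + A) ^ (p + 1) * r ^ 2 := by
  have hπ : (0:ℝ) < Real.pi := Real.pi_pos
  obtain ⟨t, ht⟩ : ∃ t : ℝ, 2 * Real.pi + A = t := ⟨_, rfl⟩
  rw [ht]
  have ht1 : (1:ℝ) ≤ t := by rw [← ht]; nlinarith [Real.pi_gt_three]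
  have ht0 : (0:ℝ) < t := by rw [← ht]; nlinarith
  obtain ⟨C, hCdef⟩ : ∃ C : ℝ, t ^ (p + 1) = C := ⟨_, rfl⟩
  rw [hCdef]
  have hC1 : (1:ℝ) ≤ C := hCdef ▸ Real.one_le_rpow ht1 (by linarith)
  have hC0 : (0:ℝ) < C := by linarith
  have hp0 : (0:ℝ) < p := by linarith
  have hexp0 : 0 ≤ 1 - 1 / p := by
    have : 1 / p ≤ 1 := by rw [div_le_one hp0]; linarith
    linarith
  -- key arithmetic inequality
  have hCe : C ^ (1 - 1 / p) = t ^ (p - 1 / p) := by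
    rw [← hCdef, ← Real.rpow_mul ht0.le]
    congr 1
    field_simp
    ring
  have key : 2 * Real.pi + 2 * A * C ^ (1 - 1 / p) < 2 * C := by
    rw [hCe]
    have hsplit : C = t ^ (1 + 1 / p) * t ^ (p - 1 / p) := by
      rw [← hCdef, ← Real.rpow_add ht0]
      congr 1
      ring
    have h2 : t ≤ t ^ (1 + 1 / p) := by
      nth_rewrite 1 [← Real.rpow_one t]
      exact Real.rpow_le_rpow_of_exponent_le ht1 (by nlinarith [one_div_pos.mpr hp0])
    have h3 : (1:ℝ) ≤ t ^ (p - 1 / p) := by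
      refine Real.one_le_rpow ht1 ?_
      have : 1 / p ≤ 1 := by rw [div_le_one hp0]; linarith
      linarith
    rw [hsplit]
    nlinarith [mul_le_mul_of_nonneg_right h2 (by linarith : (0:ℝ) ≤ t ^ (p - 1 / p))]
  intro r hr
  obtain ⟨hr0, hr1⟩ := hr
  -- main comparison with B ε = C x² + ε
  have main : ∀ ε : ℝ, 0 < ε → ε ≤ C → V r ≤ C * r ^ 2 + ε := by
    intro ε hε hεC
    have H := image_le_of_deriv_right_lt_deriv_boundary
      (f := V) (f' := deriv V) (a := 0) (b := r)
      (B := fun x => C * x ^ 2 + ε) (B' := fun x => 2 * C * x)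
      (hdiff.continuous.continuousOn)
      (fun x _ => ((hdiff x).hasDerivAt).hasDerivWithinAt)
      (by simp [h0]; positivity)
      (fun x => by
        have h := ((hasDerivAt_pow 2 x).const_mul C).add_const ε
        refine h.congr_deriv ?_
        simp
        ring)
      ?_
    · have := H (right_mem_Icc.mpr hr0.le)
      simpa using this
    · intro x hx hVx
      rcases eq_or_lt_of_le hx.1 with h | hx0
      · exfalso
        rw [← h] at hVx
        simp [h0] at hVx
        nlinarith
      · have hx1 : x < 1 := lt_trans hx.2 hr1
        have hVnn : 0 ≤ V x := hnonneg x hx0.le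
        have hode' := hode x ⟨hx0, hx1⟩
        have hb1 : (V x) ^ (1 - 1 / p) ≤ (C + ε) ^ (1 - 1 / p) := by
          apply Real.rpow_le_rpow hVnn _ hexp0
          rw [hVx]
          show C * x ^ 2 + ε ≤ C + ε
          have hx2 : x ^ 2 ≤ 1 := by nlinarith
          nlinarith [mul_le_mul_of_nonneg_left hx2 hC0.le]
        have hb2 : (C + ε) ^ (1 - 1 / p) ≤ 2 * C ^ (1 - 1 / p) := by
          calc (C + ε) ^ (1 - 1 / p) ≤ (2 * C) ^ (1 - 1 / p) :=
                Real.rpow_le_rpow (by linarith) (by linarith) hexp0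
            _ = 2 ^ (1 - 1 / p) * C ^ (1 - 1 / p) :=
                Real.mul_rpow (by norm_num) hC0.le
            _ ≤ 2 * C ^ (1 - 1 / p) := by
                have h2le : (2:ℝ) ^ (1 - 1 / p) ≤ 2 ^ (1:ℝ) :=
                  Real.rpow_le_rpow_of_exponent_le one_le_two (by nlinarith [one_div_pos.mpr hp0])
                have : (0:ℝ) ≤ C ^ (1 - 1 / p) := by positivity
                rw [Real.rpow_one] at h2le
                nlinarith
        have hfinal : deriv V x ≤ x * (2 * Real.pi + 2 * A * C ^ (1 - 1 / p)) := by
          have : A * x * (V x) ^ (1 - 1 / p) ≤ A * x * (2 * C ^ (1 - 1 / p)) := by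
            apply mul_le_mul_of_nonneg_left (hb1.trans hb2) (by positivity)
          linarith [hode', this]
        calc deriv V x ≤ x * (2 * Real.pi + 2 * A * C ^ (1 - 1 / p)) := hfinal
          _ < x * (2 * C) := by exact mul_lt_mul_of_pos_left key hx0
          _ = 2 * C * x := by ring
  -- conclude
  have hall : ∀ ε : ℝ, 0 < ε → V r ≤ C * r ^ 2 + ε := by
    intro ε hε
    rcases le_or_gt ε C with h | h
    · exact main ε hε h
    · exact (main C hC0 le_rfl).trans (by linarith)
  by_contra hcon
  push_neg at hcon
  have := hall ((V r - C * r ^ 2) / 2) (by linarith)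
  linarith
end

section
/- Let v be a measurable function on a set B of finite measure |B|, and suppose ∫_B exp(|v(x)|/C₀) dx ≤ |B| for some C₀ > 0. Then the nonincreasing rearrangement v* of v satisfies v*(t) ≤ C₀ · ln(|B|/t) for all 0 < t ≤ |B|. -/
open MeasureTheory

/-- The nonincreasing rearrangement of `v` restricted to the set `B`. -/
noncomputable def rearr (B : Set (EuclideanSpace ℝ (Fin 2)))
    (v : EuclideanSpace ℝ (Fin 2) → ℝ) (t : ℝ) : ℝ :=
  sInf {s : ℝ | 0 ≤ s ∧ volume {x ∈ B | s < |v x|} ≤ ENNReal.ofReal t}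

theorem rearrangement_log_bound_of_exp_integral (B : Set (EuclideanSpace ℝ (Fin 2)))
    (hBmeas : MeasurableSet B) (hBfin : volume B < ⊤)
    (v : EuclideanSpace ℝ (Fin 2) → ℝ) (hvmeas : Measurable v)
    (C₀ : ℝ) (hC₀ : 0 < C₀)
    (hint : IntegrableOn (fun x => Real.exp (|v x| / C₀)) B)
    (hexp : ∫ x in B, Real.exp (|v x| / C₀) ≤ (volume B).toReal) :
    ∀ t : ℝ, 0 < t → t ≤ (volume B).toReal →
      rearr B v t ≤ C₀ * Real.log ((volume B).toReal / t) := by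
  intro t ht htB
  set M : ℝ := (volume B).toReal with hM
  have hMpos : 0 < M := lt_of_lt_of_le ht htB
  set s₀ : ℝ := C₀ * Real.log (M / t) with hs₀
  have hMt : 1 ≤ M / t := (one_le_div ht).mpr htB
  have hMtpos : 0 < M / t := div_pos hMpos ht
  have hs₀nonneg : 0 ≤ s₀ := mul_nonneg hC₀.le (Real.log_nonneg hMt)
  set S : Set (EuclideanSpace ℝ (Fin 2)) := {x | M / t ≤ Real.exp (|v x| / C₀)} with hS
  have hSmeas : MeasurableSet S :=
    measurableSet_le measurable_const (((hvmeas.abs).div_const C₀).exp)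
  -- Chebyshev
  have hcheb := mul_meas_ge_le_integral_of_nonneg
    (μ := volume.restrict B)
    (f := fun x => Real.exp (|v x| / C₀))
    (Filter.Eventually.of_forall fun x => (Real.exp_pos _).le) hint (M / t)
  have hsubset : {x ∈ B | s₀ < |v x|} ⊆ S ∩ B := by
    rintro x ⟨hxB, hxv⟩
    refine ⟨?_, hxB⟩
    have h1 : s₀ / C₀ = Real.log (M / t) := by
      field_simp [hs₀]
      exact hs₀
    have h2 : s₀ / C₀ ≤ |v x| / C₀ := div_le_div_of_nonneg_right hxv.le hC₀.le
    calc M / t = Real.exp (s₀ / C₀) := by rw [h1, Real.exp_log hMtpos]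
      _ ≤ Real.exp (|v x| / C₀) := Real.exp_le_exp.mpr h2
  have hrestr : (volume.restrict B) S = volume (S ∩ B) :=
    Measure.restrict_apply hSmeas
  have hfin : (volume.restrict B) S ≠ ⊤ := by
    rw [hrestr]
    exact (lt_of_le_of_lt (measure_mono Set.inter_subset_right) hBfin).ne
  have htoReal : ((volume.restrict B) S).toReal ≤ t := by
    have := hcheb.trans hexp
    calc ((volume.restrict B) S).toReal
        = (M / t) * ((volume.restrict B) S).toReal / (M / t) := by
          field_simp
      _ ≤ M / (M / t) := by
          apply div_le_div_of_nonneg_right this hMtpos.le |>.trans_eq rfl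
      _ = t := by field_simp
  have hmemb : volume {x ∈ B | s₀ < |v x|} ≤ ENNReal.ofReal t := by
    calc volume {x ∈ B | s₀ < |v x|} ≤ (volume.restrict B) S := by
          rw [hrestr]; exact measure_mono hsubset
      _ ≤ ENNReal.ofReal t :=
          (ENNReal.le_ofReal_iff_toReal_le hfin ht.le).mpr htoReal
  exact csInf_le ⟨0, fun s hs => hs.1⟩ ⟨hs₀nonneg, hmemb⟩
end

section
/- Let u ≥ 0 be a continuous function on the closed unit disk B_1 ⊂ ℝ² and suppose there is a constant K ≥ 0 such that for all x₀ ∈ B_{1/2} and all r < 1/2, |u(x₀) − (1/(πr²))∫_{B_r(x₀)} u dx| ≤ K. Then there is a universal constant C such that max_{B_{1/2}} u ≤ C·(min_{B_{1/2}} u + K). -/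
/-!
If `u ≥ 0` and `B_r(p) ⊆ B_R(q)`, the integral of `u` over the small ball is at most the one over
the big ball, so the approximate mean value property gives `u p ≤ (R/r)² (u q + K) + K`. In
`B_{1/2}` this applies with `r = 1/8`, `R = 11/24` whenever `|p - q| ≤ 1/3`, and any two points of
`B_{1/2}` are joined by a segment of three such steps.
-/

open MeasureTheory Metric

section ApproxMeanValue

variable {E : Type*} [PseudoMetricSpace E] [MeasurableSpace E] [OpensMeasurableSpace E]
  {μ : Measure E} {u : E → ℝ} {K c r R : ℝ} {p q : E} {d : ℕ}

lemma le_of_approx_mean_value_of_ball_subset (hc : 0 < c) (hr : 0 < r)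
    (hsub : ball p r ⊆ ball q R) (hu : ∀ z ∈ ball q R, 0 ≤ u z)
    (hint : IntegrableOn u (ball q R) μ)
    (hp : |u p - (c * r ^ d)⁻¹ * ∫ x in ball p r, u x ∂μ| ≤ K)
    (hq : |u q - (c * R ^ d)⁻¹ * ∫ x in ball q R, u x ∂μ| ≤ K) :
    u p ≤ (R / r) ^ d * (u q + K) + K := by
  have hR : 0 < R := pos_of_mem_ball (hsub (mem_ball_self hr))
  have hmono : ∫ x in ball p r, u x ∂μ ≤ ∫ x in ball q R, u x ∂μ :=
    setIntegral_mono_set hint (ae_restrict_of_forall_mem measurableSet_ball hu)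
      (Filter.Eventually.of_forall hsub)
  have hrescale : (c * r ^ d)⁻¹ = (R / r) ^ d * (c * R ^ d)⁻¹ := by
    rw [div_pow]
    field_simp
  calc u p ≤ (c * r ^ d)⁻¹ * ∫ x in ball p r, u x ∂μ + K := by linarith [(abs_le.mp hp).2]
    _ ≤ (R / r) ^ d * ((c * R ^ d)⁻¹ * ∫ x in ball q R, u x ∂μ) + K := by
      rw [hrescale, mul_assoc]
      gcongr
    _ ≤ (R / r) ^ d * (u q + K) + K := by
      gcongr
      linarith [(abs_le.mp hq).1]

end ApproxMeanValue

lemma le_pow_mul_of_dist_le_of_convex {E : Type*} [NormedAddCommGroup E] [NormedSpace ℝ E]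
    {s : Set E} (hs : Convex ℝ s) {w : E → ℝ} {C δ : ℝ} (hC : 0 ≤ C)
    (hstep : ∀ p ∈ s, ∀ q ∈ s, dist p q ≤ δ → w p ≤ C * w q) (n : ℕ) {x y : E}
    (hx : x ∈ s) (hy : y ∈ s) (hxy : dist x y ≤ n * δ) : w x ≤ C ^ n * w y := by
  induction n generalizing x with
  | zero =>
    obtain rfl : x = y := dist_le_zero.mp (by simpa using hxy)
    simp
  | succ n ih =>
    set t : ℝ := (n + 1 : ℝ)⁻¹
    have hn : (0 : ℝ) < n + 1 := by positivity
    have ht0 : 0 ≤ t := by positivity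
    have ht1 : t ≤ 1 := inv_le_one_of_one_le₀ (by linarith)
    have hstep_len : t * dist x y ≤ δ := by
      rw [inv_mul_le_iff₀ hn]
      push_cast at hxy
      linarith
    set z := AffineMap.lineMap x y t
    have hz : z ∈ s := hs.lineMap_mem hx hy ⟨ht0, ht1⟩
    have hxz : dist x z ≤ δ := by
      rwa [dist_left_lineMap, Real.norm_of_nonneg ht0]
    have hzy : dist z y ≤ n * δ := by
      have hcompl : 1 - t = n * t := by simp only [t]; field_simp; ring
      rw [dist_lineMap_right, Real.norm_of_nonneg (sub_nonneg.mpr ht1), hcompl, mul_assoc]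
      gcongr
    calc w x ≤ C * w z := hstep x hx z hz hxz
      _ ≤ C * (C ^ n * w y) := by gcongr; exact ih hz hzy
      _ = C ^ (n + 1) * w y := by ring

lemma harnack_step (u : EuclideanSpace ℝ (Fin 2) → ℝ) (K : ℝ) (hK : 0 ≤ K)
    (hcont : ContinuousOn u (closedBall 0 1)) (hpos : ∀ x ∈ closedBall 0 1, 0 ≤ u x)
    (hmvp : ∀ x₀ ∈ ball (0 : EuclideanSpace ℝ (Fin 2)) (1 / 2), ∀ r : ℝ, 0 < r → r < 1 / 2 →
      |u x₀ - (Real.pi * r ^ 2)⁻¹ * ∫ x in ball x₀ r, u x| ≤ K)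
    {p q : EuclideanSpace ℝ (Fin 2)} (hp : p ∈ ball 0 (1 / 2)) (hq : q ∈ ball 0 (1 / 2))
    (hpq : dist p q ≤ 1 / 3) : u p + K ≤ 16 * (u q + K) := by
  have hbig : ball q (11 / 24) ⊆ closedBall 0 1 :=
    (ball_subset_ball' (by linarith [mem_ball.mp hq])).trans ball_subset_closedBall
  have hsmall : ball p (1 / 8) ⊆ ball q (11 / 24) := ball_subset_ball' (by linarith)
  have hint : IntegrableOn u (ball q (11 / 24)) :=
    (hcont.integrableOn_compact (isCompact_closedBall 0 1)).mono_set hbig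
  have hcompare := le_of_approx_mean_value_of_ball_subset Real.pi_pos (by norm_num) hsmall
    (fun z hz => hpos z (hbig hz)) hint (hmvp p hp _ (by norm_num) (by norm_num))
    (hmvp q hq _ (by norm_num) (by norm_num))
  have huq : 0 ≤ u q := hpos q (hbig (mem_ball_self (by norm_num)))
  norm_num at hcompare
  linarith

theorem harnack_chaining :
    ∃ C : ℝ, 0 < C ∧ ∀ (u : EuclideanSpace ℝ (Fin 2) → ℝ) (K : ℝ), 0 ≤ K →
      ContinuousOn u (Metric.closedBall (0 : EuclideanSpace ℝ (Fin 2)) 1) →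
      (∀ x ∈ Metric.closedBall (0 : EuclideanSpace ℝ (Fin 2)) 1, 0 ≤ u x) →
      (∀ x₀ ∈ Metric.ball (0 : EuclideanSpace ℝ (Fin 2)) (1 / 2), ∀ r : ℝ, 0 < r → r < 1 / 2 →
        |u x₀ - (Real.pi * r ^ 2)⁻¹ * ∫ x in Metric.ball x₀ r, u x| ≤ K) →
      ∀ x ∈ Metric.ball (0 : EuclideanSpace ℝ (Fin 2)) (1 / 2),
        ∀ y ∈ Metric.ball (0 : EuclideanSpace ℝ (Fin 2)) (1 / 2),
          u x ≤ C * (u y + K) := by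
  refine ⟨16 ^ 3, by norm_num, ?_⟩
  intro u K hK hcont hpos hmvp x hx y hy
  have hxy : dist x y ≤ (3 : ℕ) * (1 / 3 : ℝ) := by
    linarith [dist_triangle_right x y 0, mem_ball.mp hx, mem_ball.mp hy]
  calc u x ≤ u x + K := by linarith
    _ ≤ 16 ^ 3 * (u y + K) :=
      le_pow_mul_of_dist_le_of_convex (convex_ball 0 (1 / 2)) (w := fun z => u z + K)
        (by norm_num) (fun p hp q hq => harnack_step u K hK hcont hpos hmvp hp hq) 3 hx hy hxy
end
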